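/- Let T be a finite tree rooted at r, with East-on-tree constraints c̃_x(ω)=1 iff x=r or ω_y=0 where y is the ancestor of x in T. Let v be any vertex of T, a a child of v, Γ_v the set of vertices on the path in T from r to v, and T_a the subtree of T rooted at a. Set A := Γ_v ∪ T_a (a tree rooted at r) and B := T ∖ T_a (a tree rooted at r). Then gap(T,r,East) ≥ min( gap(A,r,East), gap(B,r,East) ), where each gap is that of the corresponding East-on-tree model at the same parameter q∈(0,1). -/

import Mathlib

open scoped Classical BigOperators

noncomputable section

def ind (P : Prop) : ℝ := if P then 1 else 0

def varAt {ι : Type*} [DecidableEq ι] (q : ℝ) (f : (ι → Bool) → ℝ) (x : ι) (ω : ι → Bool) : ℝ :=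
  (1 - q) * q * (f (Function.update ω x true) - f (Function.update ω x false)) ^ 2

variable {V : Type*} [Fintype V] [DecidableEq V]

/-- Expectation under the product Bernoulli measure on `{0,1}^V` (a site is empty,
i.e. `false`, with probability `q`). -/
def finExp (q : ℝ) (f : (V → Bool) → ℝ) : ℝ :=
  ∑ ω : V → Bool, (∏ x : V, if ω x then 1 - q else q) * f ω

/-- Variance under the product Bernoulli measure. -/
def finVar (q : ℝ) (f : (V → Bool) → ℝ) : ℝ :=
  finExp q (fun ω => (f ω) ^ 2) - (finExp q f) ^ 2

/-- Dirichlet form `D(f) = Σ_{x ∈ V} μ(c_x · Var_x f)`. -/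
def finDir (q : ℝ) (c : V → (V → Bool) → Prop) (f : (V → Bool) → ℝ) : ℝ :=
  ∑ x : V, finExp q (fun ω => ind (c x ω) * varAt q f x ω)

/-- Spectral gap of a finite-volume kinetically constrained model. -/
def finGap (q : ℝ) (c : V → (V → Bool) → Prop) : ℝ :=
  sInf { γ : ℝ | ∃ f : (V → Bool) → ℝ, (∃ ω ω', f ω ≠ f ω') ∧ γ = finDir q c f / finVar q f }

end

open scoped Classical in
/-- The East-on-tree constraint on the subtree spanned by the finite set `S` of a rooted
tree with parent map `parent` and root `rt`: a vertex may be updated iff it is the root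
or its ancestor carries a `0`. -/
def treeEastC {V : Type*} (parent : V → V) (rt : V) (S : Finset V)
    (x : {y // y ∈ S}) (ω : {y // y ∈ S} → Bool) : Prop :=
  (x : V) = rt ∨ ∃ h : parent (x : V) ∈ S, ω ⟨parent (x : V), h⟩ = false

/-!
Write `L` for the generator of the East dynamics on `T`; it is self-adjoint in `L²(μ)`, so by the
spectral theorem it suffices to show `min (gap A) (gap B) ≤ λ` for every nonconstant eigenfunction
`-L f = λ f`. Ergodicity gives `λ ≠ 0`, hence `μ f = 0`. Let `g` be the conditional expectation of
`f` given the configuration off `T_a`. If `g` is nonconstant, it is a function on `B` whose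
Dirichlet form for the East model on `B` is `λ Var g`: no constraint of `B` looks into `T_a`, so
the projection commutes with the dynamics there, while the sites of `T_a` contribute nothing. So
`gap B ≤ λ`. Otherwise `g = 0`, so `f` is centred on every fibre of `A` (as `T_a ⊆ A`), and the
Poincaré inequality on `A` applied fibrewise gives `gap A · μ(f²) ≤ D(f) = λ μ(f²)`.
-/

open Finset Function

noncomputable section

section Expectation

variable {ι : Type*} [Fintype ι] {q : ℝ}

def bernoulliWeight (q : ℝ) (ω : ι → Bool) : ℝ := ∏ x, if ω x then 1 - q else q

theorem bernoulliWeight_pos (hq : q ∈ Set.Ioo 0 1) (ω : ι → Bool) : 0 < bernoulliWeight q ω :=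
  prod_pos fun x _ => by cases ω x <;> simp [hq.1, hq.2]

variable [DecidableEq ι]

theorem sum_bernoulliWeight : ∑ ω : ι → Bool, bernoulliWeight q ω = 1 := by
  simp [bernoulliWeight, ← Fintype.prod_sum (fun (_ : ι) (b : Bool) => if b then 1 - q else q)]

theorem finExp_eq_sum (f : (ι → Bool) → ℝ) :
    finExp q f = ∑ ω, bernoulliWeight q ω * f ω := rfl

theorem finExp_comp_eval (x : ι) (h : Bool → ℝ) :
    finExp q (fun ω => h (ω x)) = (1 - q) * h true + q * h false := by
  have hprod (ω : ι → Bool) : (∏ y, if ω y then 1 - q else q) * h (ω x)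
      = ∏ y, (if ω y then 1 - q else q) * (if y = x then h (ω y) else 1) := by
    rw [prod_mul_distrib, prod_ite_eq' univ x, if_pos (mem_univ x)]
  simp only [finExp, hprod]
  rw [← Fintype.prod_sum (fun y b => (if b then 1 - q else q) * if y = x then h b else 1),
    prod_eq_single x (fun y _ hyx => by simp [hyx]) (by simp)]
  simp [add_comm]

theorem finExp_const (k : ℝ) : finExp q (fun _ : ι → Bool => k) = k := by
  rw [finExp_eq_sum, ← sum_mul, sum_bernoulliWeight, one_mul]

theorem finExp_add (f g : (ι → Bool) → ℝ) :
    finExp q (fun ω => f ω + g ω) = finExp q f + finExp q g := by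
  simp only [finExp, mul_add, sum_add_distrib]

theorem finExp_sub (f g : (ι → Bool) → ℝ) :
    finExp q (fun ω => f ω - g ω) = finExp q f - finExp q g := by
  simp only [finExp, mul_sub, sum_sub_distrib]

theorem finExp_const_mul (k : ℝ) (f : (ι → Bool) → ℝ) :
    finExp q (fun ω => k * f ω) = k * finExp q f := by
  simp only [finExp, mul_sum, mul_left_comm]

theorem finExp_sum {α : Type*} (s : Finset α) (F : α → (ι → Bool) → ℝ) :
    finExp q (fun ω => ∑ a ∈ s, F a ω) = ∑ a ∈ s, finExp q (F a) := by
  simp only [finExp, mul_sum]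
  exact sum_comm

theorem finExp_mono (hq : q ∈ Set.Ioo 0 1) {f g : (ι → Bool) → ℝ} (h : ∀ ω, f ω ≤ g ω) :
    finExp q f ≤ finExp q g :=
  sum_le_sum fun ω _ => mul_le_mul_of_nonneg_left (h ω) (bernoulliWeight_pos hq ω).le

theorem finExp_nonneg (hq : q ∈ Set.Ioo 0 1) {f : (ι → Bool) → ℝ} (h : ∀ ω, 0 ≤ f ω) :
    0 ≤ finExp q f :=
  sum_nonneg fun ω _ => mul_nonneg (bernoulliWeight_pos hq ω).le (h ω)

theorem eq_zero_of_finExp_eq_zero (hq : q ∈ Set.Ioo 0 1) {f : (ι → Bool) → ℝ}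
    (h : ∀ ω, 0 ≤ f ω) (h0 : finExp q f = 0) (ω : ι → Bool) : f ω = 0 := by
  have := (sum_eq_zero_iff_of_nonneg fun ω _ =>
    mul_nonneg (bernoulliWeight_pos hq ω).le (h ω)).1 h0 ω (mem_univ ω)
  exact (mul_eq_zero.1 this).resolve_left (bernoulliWeight_pos hq ω).ne'

theorem finVar_eq_finExp_sub_sq (f : (ι → Bool) → ℝ) :
    finVar q f = finExp q (fun ω => (f ω - finExp q f) ^ 2) := by
  have hexp : (fun ω => (f ω - finExp q f) ^ 2)
      = fun ω => f ω ^ 2 - 2 * finExp q f * f ω + finExp q f ^ 2 := by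
    funext ω; ring
  rw [finVar, hexp, finExp_add, finExp_sub, finExp_const_mul, finExp_const]
  ring

theorem finVar_pos (hq : q ∈ Set.Ioo 0 1) {f : (ι → Bool) → ℝ} (hf : ∃ ω ω', f ω ≠ f ω') :
    0 < finVar q f := by
  rw [finVar_eq_finExp_sub_sq]
  refine (finExp_nonneg hq fun ω => sq_nonneg _).lt_of_ne fun h => ?_
  obtain ⟨ω, ω', hne⟩ := hf
  have h0 := eq_zero_of_finExp_eq_zero hq (fun ω => sq_nonneg _) h.symm
  exact hne (by linarith [sub_eq_zero.1 (pow_eq_zero_iff two_ne_zero |>.1 (h0 ω)),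
    sub_eq_zero.1 (pow_eq_zero_iff two_ne_zero |>.1 (h0 ω'))])

end Expectation

section CondExp

variable {ι : Type*} [Fintype ι] [DecidableEq ι] {q : ℝ}

def condExpOn (q : ℝ) (S : Finset ι) (f : (ι → Bool) → ℝ) (ω : ι → Bool) : ℝ :=
  finExp q (fun ω' => f (S.piecewise ω' ω))

theorem bernoulliWeight_piecewise_mul (S : Finset ι) (ω ω' : ι → Bool) :
    bernoulliWeight q (S.piecewise ω' ω) * bernoulliWeight q (S.piecewise ω ω')
      = bernoulliWeight q ω * bernoulliWeight q ω' := by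
  simp only [bernoulliWeight, ← prod_mul_distrib]
  refine prod_congr rfl fun x _ => ?_
  by_cases hx : x ∈ S <;> simp [hx, mul_comm]

/-- Exchanging the coordinates in `S` of two independent configurations preserves the product
measure. -/
theorem finExp_condExpOn (S : Finset ι) (f : (ι → Bool) → ℝ) :
    finExp q (condExpOn q S f) = finExp q f := by
  set Φ : (ι → Bool) × (ι → Bool) → (ι → Bool) × (ι → Bool) :=
    fun p => (S.piecewise p.2 p.1, S.piecewise p.1 p.2)
  have hΦ : Involutive Φ := fun p => by
    ext x <;> by_cases hx : x ∈ S <;> simp [Φ, hx]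
  calc finExp q (condExpOn q S f)
      = ∑ p : (ι → Bool) × (ι → Bool),
          bernoulliWeight q (Φ p).1 * bernoulliWeight q (Φ p).2 * f (Φ p).1 := by
        simp only [condExpOn, finExp_eq_sum, mul_sum, ← Fintype.sum_prod_type']
        refine sum_congr rfl fun p _ => ?_
        rw [bernoulliWeight_piecewise_mul, mul_assoc]
    _ = ∑ p : (ι → Bool) × (ι → Bool),
          bernoulliWeight q p.1 * bernoulliWeight q p.2 * f p.1 :=
        Equiv.sum_comp hΦ.toPerm (fun p => bernoulliWeight q p.1 * bernoulliWeight q p.2 * f p.1)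
    _ = finExp q f := by
        simp only [Fintype.sum_prod_type, finExp_eq_sum, mul_right_comm _ _ (f _), ← mul_sum,
          sum_bernoulliWeight, mul_one]

theorem condExpOn_sub (S : Finset ι) (f g : (ι → Bool) → ℝ) (ω : ι → Bool) :
    condExpOn q S (fun ζ => f ζ - g ζ) ω = condExpOn q S f ω - condExpOn q S g ω :=
  finExp_sub _ _

theorem condExpOn_condExpOn_of_subset {S T : Finset ι} (hTS : T ⊆ S) (f : (ι → Bool) → ℝ) :
    condExpOn q S (condExpOn q T f) = condExpOn q S f := by
  funext ω
  have hpw (ω' ω'' : ι → Bool) :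
      T.piecewise ω'' (S.piecewise ω' ω) = S.piecewise (T.piecewise ω'' ω') ω := by
    ext x; by_cases hxT : x ∈ T <;> by_cases hxS : x ∈ S <;> simp_all [@hTS x]
  simp only [condExpOn, hpw]
  exact finExp_condExpOn T (fun ω' => f (S.piecewise ω' ω))

theorem dependsOn_condExpOn (S : Finset ι) (f : (ι → Bool) → ℝ) :
    DependsOn (condExpOn q S f) (↑S)ᶜ := fun ω ω' h => by
  unfold condExpOn
  congr 1; funext ω''; congr 1
  ext x; by_cases hx : x ∈ S <;> simp [hx, h x]

theorem condExpOn_mul_left {S : Finset ι} {g : (ι → Bool) → ℝ} (hg : DependsOn g (↑S)ᶜ)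
    (f : (ι → Bool) → ℝ) (ω : ι → Bool) :
    condExpOn q S (fun ζ => g ζ * f ζ) ω = g ω * condExpOn q S f ω := by
  have hgω (ω' : ι → Bool) : g (S.piecewise ω' ω) = g ω :=
    hg fun x hx => S.piecewise_eq_of_notMem _ _ hx
  simp only [condExpOn, hgω, finExp_const_mul]

theorem condExpOn_of_dependsOn {S : Finset ι} {f : (ι → Bool) → ℝ} (hf : DependsOn f S)
    (ω : ι → Bool) : condExpOn q S f ω = finExp q f := by
  unfold condExpOn
  congr 1; funext ω'
  exact hf fun x hx => S.piecewise_eq_of_mem _ _ hx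

end CondExp

section SiteMean

variable {ι : Type*} [DecidableEq ι] {q : ℝ}

def siteMean (q : ℝ) (x : ι) (f : (ι → Bool) → ℝ) (ω : ι → Bool) : ℝ :=
  (1 - q) * f (update ω x true) + q * f (update ω x false)

theorem DependsOn.update_eq {β : Type*} {g : (ι → Bool) → β} {x : ι}
    (hg : DependsOn g ({x}ᶜ : Set ι)) (ω : ι → Bool) (b : Bool) :
    g (Function.update ω x b) = g ω :=
  hg fun _ hy => update_of_ne hy _ _

def SiteIndependent (c : ι → (ι → Bool) → Prop) : Prop :=
  ∀ x, DependsOn (c x) ({x}ᶜ : Set ι)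

variable [Fintype ι]

theorem condExpOn_singleton (x : ι) (f : (ι → Bool) → ℝ) :
    condExpOn q {x} f = siteMean q x f := by
  funext ω
  simp only [condExpOn, piecewise_singleton]
  exact finExp_comp_eval x fun b => f (update ω x b)

theorem finExp_siteMean (x : ι) (f : (ι → Bool) → ℝ) :
    finExp q (siteMean q x f) = finExp q f := by
  rw [← condExpOn_singleton, finExp_condExpOn]

theorem condExpOn_siteMean {S : Finset ι} {x : ι} (hx : x ∉ S) (f : (ι → Bool) → ℝ) :
    condExpOn q S (siteMean q x f) = siteMean q x (condExpOn q S f) := by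
  funext ω
  simp only [condExpOn, siteMean, ← S.update_piecewise_of_notMem _ _ hx, finExp_add,
    finExp_const_mul]

end SiteMean

section Generator

variable {ι : Type*} [Fintype ι] [DecidableEq ι] {q : ℝ}

/-- Minus the generator of the kinetically constrained model with constraints `c`. -/
def negGen (q : ℝ) (c : ι → (ι → Bool) → Prop) :
    ((ι → Bool) → ℝ) →ₗ[ℝ] ((ι → Bool) → ℝ) where
  toFun f ω := ∑ x, ind (c x ω) * (f ω - siteMean q x f ω)
  map_add' f g := by
    funext ω
    simp only [siteMean, Pi.add_apply, ← sum_add_distrib]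
    exact sum_congr rfl fun x _ => by ring
  map_smul' k f := by
    funext ω
    simp only [siteMean, Pi.smul_apply, smul_eq_mul, RingHom.id_apply, mul_sum]
    exact sum_congr rfl fun x _ => by ring

theorem negGen_apply (c : ι → (ι → Bool) → Prop) (f : (ι → Bool) → ℝ) (ω : ι → Bool) :
    negGen q c f ω = ∑ x, ind (c x ω) * (f ω - siteMean q x f ω) := rfl

theorem finExp_ind_mul_varAt {P : (ι → Bool) → Prop} {x : ι} (hP : DependsOn P ({x}ᶜ : Set ι))
    (f : (ι → Bool) → ℝ) :
    finExp q (fun ω => ind (P ω) * varAt q f x ω)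
      = finExp q (fun ω => ind (P ω) * (f ω * (f ω - siteMean q x f ω))) := by
  rw [← finExp_siteMean x (fun ω => ind (P ω) * (f ω * (f ω - siteMean q x f ω)))]
  congr 1; funext ω
  simp only [siteMean, varAt, update_idem, hP.update_eq]
  ring

theorem finExp_ind_mul_sub_siteMean_comm {P : (ι → Bool) → Prop} {x : ι}
    (hP : DependsOn P ({x}ᶜ : Set ι)) (f g : (ι → Bool) → ℝ) :
    finExp q (fun ω => ind (P ω) * (g ω * (f ω - siteMean q x f ω)))
      = finExp q (fun ω => ind (P ω) * (f ω * (g ω - siteMean q x g ω))) := by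
  rw [← finExp_siteMean x (fun ω => ind (P ω) * (g ω * (f ω - siteMean q x f ω))),
    ← finExp_siteMean x (fun ω => ind (P ω) * (f ω * (g ω - siteMean q x g ω)))]
  congr 1; funext ω
  simp only [siteMean, update_idem, hP.update_eq]
  ring

theorem finExp_mul_sub_siteMean_eq_zero {g : (ι → Bool) → ℝ} {x : ι}
    (hg : DependsOn g ({x}ᶜ : Set ι)) (f : (ι → Bool) → ℝ) :
    finExp q (fun ω => g ω * (f ω - siteMean q x f ω)) = 0 := by
  rw [← finExp_siteMean x, ← finExp_const (q := q) (ι := ι) 0]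
  congr 1; funext ω
  simp only [siteMean, update_idem, hg.update_eq]
  ring

theorem finExp_mul_negGen (c : ι → (ι → Bool) → Prop) (f g : (ι → Bool) → ℝ) :
    finExp q (fun ω => g ω * negGen q c f ω)
      = ∑ x, finExp q (fun ω => ind (c x ω) * (g ω * (f ω - siteMean q x f ω))) := by
  rw [← finExp_sum]
  congr 1; funext ω
  rw [negGen_apply, mul_sum]
  exact sum_congr rfl fun x _ => by ring

theorem finDir_eq_finExp_mul_negGen {c : ι → (ι → Bool) → Prop} (hc : SiteIndependent c)
    (f : (ι → Bool) → ℝ) : finDir q c f = finExp q (fun ω => f ω * negGen q c f ω) := by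
  rw [finExp_mul_negGen]
  exact sum_congr rfl fun x _ => finExp_ind_mul_varAt (hc x) f

theorem finExp_mul_negGen_comm {c : ι → (ι → Bool) → Prop} (hc : SiteIndependent c)
    (f g : (ι → Bool) → ℝ) :
    finExp q (fun ω => g ω * negGen q c f ω) = finExp q (fun ω => f ω * negGen q c g ω) := by
  rw [finExp_mul_negGen, finExp_mul_negGen]
  exact sum_congr rfl fun x _ => finExp_ind_mul_sub_siteMean_comm (hc x) f g

theorem finExp_negGen {c : ι → (ι → Bool) → Prop} (hc : SiteIndependent c)
    (f : (ι → Bool) → ℝ) : finExp q (negGen q c f) = 0 := by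
  have hconst : negGen q c (fun _ => 1) = 0 := by
    funext ω
    simp [negGen_apply, siteMean]
  simpa [hconst, finExp_const] using finExp_mul_negGen_comm (q := q) hc f (fun _ => 1)

end Generator

theorem LinearMap.IsSymmetric.mul_inner_self_le_inner_apply {E : Type*} [NormedAddCommGroup E]
    [InnerProductSpace ℝ E] [FiniteDimensional ℝ E] {T : E →ₗ[ℝ] E} (hT : T.IsSymmetric)
    (u : E) (m : ℝ) (h : ∀ (w : E) (μ : ℝ), T w = μ • w → inner ℝ w u ≠ 0 → m ≤ μ) :
    m * inner ℝ u u ≤ inner ℝ u (T u) := by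
  set B := hT.eigenvectorBasis rfl
  set μ := hT.eigenvalues rfl
  have hB (i) : T (B i) = μ i • B i := hT.apply_eigenvectorBasis rfl i
  rw [← B.sum_inner_mul_inner u u, ← B.sum_inner_mul_inner u (T u), mul_sum]
  refine sum_le_sum fun i _ => ?_
  rw [← hT, hB, real_inner_smul_left, real_inner_comm (B i) u]
  by_cases hi : inner ℝ (B i) u = 0
  · simp [hi]
  · nlinarith [mul_le_mul_of_nonneg_right (h (B i) (μ i) (hB i) hi)
      (mul_self_nonneg (inner ℝ (B i) u))]

section L2

variable {ι : Type*} [Fintype ι] {q : ℝ}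

def sqrtWeightEquiv (hq : q ∈ Set.Ioo 0 1) : ((ι → Bool) → ℝ) ≃ₗ[ℝ] EuclideanSpace ℝ (ι → Bool) :=
  (LinearEquiv.piCongrRight fun ω => LinearEquiv.smulOfNeZero ℝ ℝ _
    (Real.sqrt_pos.2 (bernoulliWeight_pos hq ω)).ne').trans (WithLp.linearEquiv 2 ℝ _).symm

theorem sqrtWeightEquiv_apply (hq : q ∈ Set.Ioo 0 1) (f : (ι → Bool) → ℝ) (ω : ι → Bool) :
    sqrtWeightEquiv hq f ω = √(bernoulliWeight q ω) * f ω := rfl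

variable [DecidableEq ι]

theorem inner_sqrtWeightEquiv (hq : q ∈ Set.Ioo 0 1) (f g : (ι → Bool) → ℝ) :
    inner ℝ (sqrtWeightEquiv hq f) (sqrtWeightEquiv hq g) = finExp q (fun ω => f ω * g ω) := by
  simp only [PiLp.inner_apply, sqrtWeightEquiv_apply, finExp_eq_sum, RCLike.inner_apply,
    conj_trivial]
  refine sum_congr rfl fun ω _ => ?_
  linear_combination (f ω * g ω) * Real.mul_self_sqrt (bernoulliWeight_pos hq ω).le

end L2

section Gap

variable {ι : Type*} [DecidableEq ι] {q : ℝ}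

theorem ind_mul_varAt_nonneg (hq : q ∈ Set.Ioo 0 1) (P : Prop) (f : (ι → Bool) → ℝ) (x : ι)
    (ω : ι → Bool) : 0 ≤ ind P * varAt q f x ω := by
  have h1q : 0 ≤ 1 - q := by linarith [hq.2]
  refine mul_nonneg ?_ ?_
  · unfold ind; split_ifs <;> norm_num
  · unfold varAt; have := hq.1.le; positivity

variable [Fintype ι]

theorem finDir_nonneg (hq : q ∈ Set.Ioo 0 1) (c : ι → (ι → Bool) → Prop) (f : (ι → Bool) → ℝ) :
    0 ≤ finDir q c f :=
  sum_nonneg fun x _ => finExp_nonneg hq fun ω => ind_mul_varAt_nonneg hq _ f x ω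

theorem ind_mul_varAt_eq_zero_of_finDir_eq_zero (hq : q ∈ Set.Ioo 0 1)
    {c : ι → (ι → Bool) → Prop} {f : (ι → Bool) → ℝ} (hD : finDir q c f = 0) (x : ι)
    (ω : ι → Bool) : ind (c x ω) * varAt q f x ω = 0 :=
  eq_zero_of_finExp_eq_zero hq (fun ω => ind_mul_varAt_nonneg hq _ f x ω)
    ((sum_eq_zero_iff_of_nonneg fun x _ => finExp_nonneg hq fun ω =>
      ind_mul_varAt_nonneg hq _ f x ω).1 hD x (mem_univ x)) ω

theorem finDir_sub_const (c : ι → (ι → Bool) → Prop) (f : (ι → Bool) → ℝ) (k : ℝ) :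
    finDir q c (fun ω => f ω - k) = finDir q c f := by
  simp only [finDir, varAt, sub_sub_sub_cancel_right]

theorem finGap_le_div (hq : q ∈ Set.Ioo 0 1) (c : ι → (ι → Bool) → Prop)
    {f : (ι → Bool) → ℝ} (hf : ∃ ω ω', f ω ≠ f ω') :
    finGap q c ≤ finDir q c f / finVar q f := by
  refine csInf_le ⟨0, ?_⟩ ⟨f, hf, rfl⟩
  rintro _ ⟨g, hg, rfl⟩
  exact div_nonneg (finDir_nonneg hq c g) (finVar_pos hq hg).le

theorem finGap_mul_finVar_le_finDir (hq : q ∈ Set.Ioo 0 1) (c : ι → (ι → Bool) → Prop)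
    (f : (ι → Bool) → ℝ) : finGap q c * finVar q f ≤ finDir q c f := by
  by_cases hf : ∃ ω ω', f ω ≠ f ω'
  · exact (le_div_iff₀ (finVar_pos hq hf)).1 (finGap_le_div hq c hf)
  · push Not at hf
    have hconst : f = fun _ => f (fun _ => true) := funext fun ω => hf ω _
    rw [hconst, finVar, finExp_const, finExp_const, sub_self, mul_zero]
    exact finDir_nonneg hq c _

theorem le_finGap [Nonempty ι] (hq : q ∈ Set.Ioo 0 1) {c : ι → (ι → Bool) → Prop} {m : ℝ}
    (h : ∀ f : (ι → Bool) → ℝ, (∃ ω ω', f ω ≠ f ω') → m * finVar q f ≤ finDir q c f) :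
    m ≤ finGap q c := by
  obtain ⟨x⟩ := ‹Nonempty ι›
  refine le_csInf ⟨_, fun ω => if ω x then 1 else 0, ⟨fun _ => true, fun _ => false, by simp⟩,
    rfl⟩ ?_
  rintro _ ⟨f, hf, rfl⟩
  exact (le_div_iff₀ (finVar_pos hq hf)).2 (h f hf)

theorem mul_finVar_le_finDir_of_eigen (hq : q ∈ Set.Ioo 0 1) {c : ι → (ι → Bool) → Prop}
    (hc : SiteIndependent c) {m : ℝ}
    (hm : ∀ (g : (ι → Bool) → ℝ) (μ : ℝ), negGen q c g = μ • g → (∃ ω ω', g ω ≠ g ω') → m ≤ μ)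
    (f : (ι → Bool) → ℝ) : m * finVar q f ≤ finDir q c f := by
  set e := sqrtWeightEquiv (ι := ι) hq
  set T := e.conj (negGen q c)
  have hTe (g : (ι → Bool) → ℝ) : T (e g) = e (negGen q c g) := by
    simp [T, LinearEquiv.conj_apply]
  have hT : T.IsSymmetric := fun u w => by
    rw [← e.apply_symm_apply u, ← e.apply_symm_apply w, hTe, hTe, inner_sqrtWeightEquiv,
      inner_sqrtWeightEquiv]
    simpa only [mul_comm] using finExp_mul_negGen_comm hc (e.symm u) (e.symm w)
  set f₀ : (ι → Bool) → ℝ := fun ω => f ω - finExp q f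
  have hVar : finVar q f = inner ℝ (e f₀) (e f₀) := by
    rw [inner_sqrtWeightEquiv, finVar_eq_finExp_sub_sq]
    simp only [f₀, sq]
  have hDir : finDir q c f = inner ℝ (e f₀) (T (e f₀)) := by
    rw [hTe, inner_sqrtWeightEquiv, ← finDir_eq_finExp_mul_negGen hc, finDir_sub_const]
  rw [hVar, hDir]
  refine hT.mul_inner_self_le_inner_apply _ m fun w μ hw hne => hm (e.symm w) μ ?_ ?_
  · apply e.injective
    rw [← hTe, e.apply_symm_apply, hw, map_smul, e.apply_symm_apply]
  · by_contra! hconst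
    refine hne ?_
    rw [← e.apply_symm_apply w, inner_sqrtWeightEquiv]
    have hk (ω : ι → Bool) : e.symm w ω = e.symm w (fun _ => true) := hconst ω _
    simp only [hk, finExp_const_mul, f₀, finExp_sub, finExp_const, sub_self, mul_zero]

end Gap

section Restriction

variable {ι : Type*} [Fintype ι] [DecidableEq ι] {q : ℝ}

theorem finExp_restrict (S : Finset ι) (G : (S → Bool) → ℝ) :
    finExp q (fun ω => G (S.restrict ω)) = finExp q G := by
  set e := Equiv.piEquivPiSubtypeProd (· ∈ S) (fun _ => Bool)
  have hW (p : (S → Bool) × ({x // x ∉ S} → Bool)) :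
      bernoulliWeight q (e.symm p) = bernoulliWeight q p.1 * bernoulliWeight q p.2 := by
    rw [bernoulliWeight, ← Fintype.prod_subtype_mul_prod_subtype (· ∈ S)]
    congr 1 <;> exact prod_congr (by convert rfl) fun x _ => by simp [e, x.2]
  rw [finExp_eq_sum, ← e.symm.sum_comp, Fintype.sum_prod_type, finExp_eq_sum]
  refine sum_congr rfl fun σ _ => ?_
  have hσ (τ : {x // x ∉ S} → Bool) : S.restrict (e.symm (σ, τ)) = σ := by
    funext x; simp [e, x.2]
  simp only [hW, hσ, mul_right_comm _ _ (G σ), ← mul_sum, sum_bernoulliWeight, mul_one]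

theorem condExpOn_eq_finExp_updateFinset (S : Finset ι) (f : (ι → Bool) → ℝ) (ω : ι → Bool) :
    condExpOn q S f ω = finExp q (fun σ : S → Bool => f (updateFinset ω S σ)) := by
  rw [← finExp_restrict]
  rfl

theorem finVar_updateFinset (S : Finset ι) (f : (ι → Bool) → ℝ) (ω : ι → Bool) :
    finVar q (fun σ : S → Bool => f (updateFinset ω S σ))
      = condExpOn q S (fun ζ => f ζ ^ 2) ω - condExpOn q S f ω ^ 2 := by
  rw [finVar, condExpOn_eq_finExp_updateFinset, condExpOn_eq_finExp_updateFinset]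

end Restriction

section LocalFunctions

variable {ι : Type*} [DecidableEq ι] {q : ℝ}

theorem exists_updateFinset_ne {S : Finset ι} {f : (ι → Bool) → ℝ} (hf : DependsOn f S)
    (ω : ι → Bool) (hnc : ∃ ω₁ ω₂, f ω₁ ≠ f ω₂) :
    ∃ σ₁ σ₂ : S → Bool, f (updateFinset ω S σ₁) ≠ f (updateFinset ω S σ₂) := by
  obtain ⟨ω₁, ω₂, hne⟩ := hnc
  have hrestrict (ω' : ι → Bool) : f (updateFinset ω S (S.restrict ω')) = f ω' :=
    hf fun x hx => by simp [updateFinset, mem_coe.1 hx]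
  exact ⟨S.restrict ω₁, S.restrict ω₂, by rwa [hrestrict, hrestrict]⟩

variable [Fintype ι]

theorem finVar_updateFinset_of_dependsOn {S : Finset ι} {f : (ι → Bool) → ℝ}
    (hf : DependsOn f S) (ω : ι → Bool) :
    finVar q (fun σ : S → Bool => f (updateFinset ω S σ)) = finVar q f := by
  rw [finVar_updateFinset, condExpOn_of_dependsOn hf,
    condExpOn_of_dependsOn fun _ _ h => by rw [hf h], finVar]

theorem eq_of_forall_update_eq {β : Type*} {f : (ι → Bool) → β}
    (h : ∀ x ω b, f (update ω x b) = f ω) (ω ω' : ι → Bool) : f ω = f ω' := by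
  have hdep (s : Finset ι) : DependsOn f ↑(univ \ s) := by
    induction s using Finset.induction_on with
    | empty => simpa using dependsOn_univ f
    | insert x s _ ih => simpa only [sdiff_insert, h] using ih.update x true
  exact (by simpa using hdep univ : DependsOn f ∅).empty ω ω'

end LocalFunctions

section East

variable {V : Type*} {q : ℝ} {parent : V → V} {r : V}

variable (parent r) in
def eastC (x : V) (ω : V → Bool) : Prop := x = r ∨ ω (parent x) = false

theorem parent_ne_self (hreach : ∀ x, ∃ n : ℕ, parent^[n] x = r) {x : V} (hx : x ≠ r) :
    parent x ≠ x := fun hpx => by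
  obtain ⟨n, hn⟩ := hreach x
  exact hx (by rwa [iterate_fixed hpx] at hn)

theorem dependsOn_eastC (x : V) : DependsOn (eastC parent r x) {parent x} := fun ω ω' h => by
  simp [eastC, h (parent x) rfl]

variable [DecidableEq V]

theorem siteIndependent_eastC (hreach : ∀ x, ∃ n : ℕ, parent^[n] x = r) :
    SiteIndependent (eastC parent r) := fun x => by
  by_cases hx : x = r
  · exact fun ω ω' _ => by simp [eastC, hx]
  · exact (dependsOn_eastC x).mono (by simpa using (parent_ne_self hreach hx).symm)

theorem treeEastC_iff_eastC {S : Finset V} (hS : ∀ x ∈ S, parent x ∈ S) {x : V} (hx : x ∈ S)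
    (σ : S → Bool) (ω : V → Bool) :
    treeEastC parent r S ⟨x, hx⟩ σ ↔ eastC parent r x (updateFinset ω S σ) := by
  simp [treeEastC, eastC, updateFinset, hS x hx]

theorem update_eq_of_eastC_invariant (hreach : ∀ x, ∃ n : ℕ, parent^[n] x = r)
    {f : (V → Bool) → ℝ}
    (hf : ∀ x ω, eastC parent r x ω → f (update ω x true) = f (update ω x false))
    (x : V) (ω : V → Bool) (b : Bool) : f (update ω x b) = f ω := by
  have hflip (x : V) (ω : V → Bool) (hx : eastC parent r x ω) (b : Bool) :
      f (update ω x b) = f ω := by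
    conv_rhs => rw [← update_eq_self x ω]
    cases b <;> cases ω x <;> simp [hf x ω hx]
  obtain ⟨n, hn⟩ := hreach x
  induction n generalizing x ω b with
  | zero => exact hflip x ω (Or.inl hn) b
  | succ n ih =>
    by_cases hxr : x = r
    · exact hflip x ω (Or.inl hxr) b
    -- empty the parent, flip `x`, then restore the parent
    have hpx := parent_ne_self hreach hxr
    have hy (ω : V → Bool) (b : Bool) : f (update ω (parent x) b) = f ω :=
      ih (parent x) ω b (by rwa [← iterate_succ_apply])
    calc f (update ω x b) = f (update (update ω x b) (parent x) false) := (hy _ _).symm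
      _ = f (update (update ω (parent x) false) x b) := by rw [update_comm hpx]
      _ = f (update ω (parent x) false) := hflip x _ (Or.inr (by simp)) b
      _ = f ω := hy _ _

variable [Fintype V]

theorem finDir_treeEastC_updateFinset {S : Finset V} (hS : ∀ x ∈ S, parent x ∈ S)
    (f : (V → Bool) → ℝ) (ω : V → Bool) :
    finDir q (treeEastC parent r S) (fun σ => f (updateFinset ω S σ))
      = ∑ x ∈ S, condExpOn q S (fun ζ => ind (eastC parent r x ζ) * varAt q f x ζ) ω := by
  rw [finDir, ← sum_coe_sort S]
  refine sum_congr rfl fun ⟨x, hx⟩ _ => ?_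
  have hupd (σ : S → Bool) (b : Bool) :
      updateFinset ω S (update σ ⟨x, hx⟩ b) = update (updateFinset ω S σ) x b := by
    ext y
    by_cases hy : y = x
    · subst hy; simp [updateFinset, hx]
    · by_cases hyS : y ∈ S <;> simp [updateFinset, hy, hyS]
  simp only [condExpOn_eq_finExp_updateFinset, varAt, hupd, treeEastC_iff_eastC (ω := ω) hS hx]

theorem finDir_treeEastC_updateFinset_of_dependsOn {S : Finset V}
    (hS : ∀ x ∈ S, parent x ∈ S) {f : (V → Bool) → ℝ} (hf : DependsOn f S) (ω : V → Bool) :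
    finDir q (treeEastC parent r S) (fun σ => f (updateFinset ω S σ))
      = ∑ x ∈ S, finExp q (fun ζ => ind (eastC parent r x ζ) * varAt q f x ζ) := by
  rw [finDir_treeEastC_updateFinset hS]
  refine sum_congr rfl fun x hx => condExpOn_of_dependsOn (fun ω₁ ω₂ h => ?_) ω
  have hupd (b : Bool) : f (update ω₁ x b) = f (update ω₂ x b) := hf fun y hy => by
    by_cases hyx : y = x
    · simp [hyx]
    · simp [hyx, h y hy]
  rw [varAt, varAt, hupd, hupd, dependsOn_eastC x fun y hy => h y (by simp_all)]

theorem eq_of_finDir_eastC_eq_zero (hq : q ∈ Set.Ioo 0 1)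
    (hreach : ∀ x, ∃ n : ℕ, parent^[n] x = r) {f : (V → Bool) → ℝ}
    (hD : finDir q (eastC parent r) f = 0) (ω ω' : V → Bool) : f ω = f ω' := by
  refine eq_of_forall_update_eq (update_eq_of_eastC_invariant hreach fun x ω hx => ?_) ω ω'
  have h := ind_mul_varAt_eq_zero_of_finDir_eq_zero hq hD x ω
  rw [ind, if_pos hx, one_mul, varAt] at h
  have hsq := (mul_eq_zero.1 h).resolve_left (mul_ne_zero (by linarith [hq.2]) hq.1.ne')
  exact sub_eq_zero.1 (pow_eq_zero_iff two_ne_zero |>.1 hsq)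

end East

section Projection

variable {ι : Type*} [Fintype ι] [DecidableEq ι] {q : ℝ}

theorem finExp_mul_condExpOn {S : Finset ι} {g : (ι → Bool) → ℝ} (hg : DependsOn g (↑S)ᶜ)
    (f : (ι → Bool) → ℝ) :
    finExp q (fun ω => g ω * condExpOn q S f ω) = finExp q (fun ω => g ω * f ω) := by
  rw [← finExp_condExpOn S (fun ω => g ω * f ω)]
  congr 1; funext ω
  exact (condExpOn_mul_left hg f ω).symm

/-- At a site outside `S` the projection `condExpOn q S` commutes with the constrained local
dynamics; at a site inside `S` it is invariant, so those sites contribute nothing. -/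
theorem sum_finExp_ind_mul_varAt_condExpOn {c : ι → (ι → Bool) → Prop} (hc : SiteIndependent c)
    {S : Finset ι} (hcS : ∀ x ∉ S, DependsOn (c x) (↑S)ᶜ) (f : (ι → Bool) → ℝ) :
    ∑ x ∈ univ \ S, finExp q (fun ω => ind (c x ω) * varAt q (condExpOn q S f) x ω)
      = finExp q (fun ω => condExpOn q S f ω * negGen q c f ω) := by
  set g := condExpOn q S f
  have hg : DependsOn g (↑S)ᶜ := dependsOn_condExpOn S f
  have houtside (x : ι) (hx : x ∉ S) :
      finExp q (fun ω => ind (c x ω) * varAt q g x ω)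
        = finExp q (fun ω => ind (c x ω) * (g ω * (f ω - siteMean q x f ω))) := by
    have hind : DependsOn (fun ω => ind (c x ω)) (↑S)ᶜ := fun ω ω' h =>
      congrArg ind (hcS x hx h)
    have hproj (ω : ι → Bool) : ind (c x ω) * (g ω - siteMean q x g ω)
        = condExpOn q S (fun ζ => ind (c x ζ) * (f ζ - siteMean q x f ζ)) ω := by
      rw [condExpOn_mul_left hind, condExpOn_sub, condExpOn_siteMean hx]
    calc finExp q (fun ω => ind (c x ω) * varAt q g x ω)
        = finExp q (fun ω => g ω * (ind (c x ω) * (g ω - siteMean q x g ω))) := by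
          rw [finExp_ind_mul_varAt (hc x)]; simp only [mul_left_comm]
      _ = finExp q (fun ω => ind (c x ω) * (g ω * (f ω - siteMean q x f ω))) := by
          simp only [hproj, finExp_mul_condExpOn hg, mul_left_comm]
  have hinside (x : ι) (hx : x ∈ S) :
      finExp q (fun ω => ind (c x ω) * (g ω * (f ω - siteMean q x f ω))) = 0 := by
    have hgx : DependsOn (fun ω => ind (c x ω) * g ω) ({x}ᶜ : Set ι) := fun ω ω' h => by
      simp only [hc x h, hg fun y hy => h y fun hyx => hy (by simp_all)]
    simpa only [mul_assoc] using finExp_mul_sub_siteMean_eq_zero hgx f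
  rw [finExp_mul_negGen, ← sum_sdiff (subset_univ S), sum_eq_zero hinside, add_zero]
  exact sum_congr rfl fun x hx => houtside x (mem_sdiff.1 hx).2

end Projection

section Decomposition

variable {V : Type*} [Fintype V] [DecidableEq V] {q : ℝ} {parent : V → V} {r : V}

theorem finGap_treeEastC_le_of_condExpOn_nonconst (hq : q ∈ Set.Ioo 0 1)
    (hreach : ∀ x, ∃ n : ℕ, parent^[n] x = r) {S : Finset V} (hS : ∀ x, parent x ∈ S → x ∈ S)
    {f : (V → Bool) → ℝ} {μ : ℝ} (hf : negGen q (eastC parent r) f = μ • f)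
    (hf0 : finExp q f = 0) (hg : ∃ ω ω', condExpOn q S f ω ≠ condExpOn q S f ω') :
    finGap q (treeEastC parent r (univ \ S)) ≤ μ := by
  set g := condExpOn q S f
  have hB : ∀ x ∈ univ \ S, parent x ∈ univ \ S := fun x hx => by
    simp only [mem_sdiff, mem_univ, true_and] at hx ⊢
    exact fun h => hx (hS x h)
  have hgB : DependsOn g ↑(univ \ S) := by
    rw [coe_sdiff, coe_univ, ← Set.compl_eq_univ_sdiff]
    exact dependsOn_condExpOn S f
  have hcS : ∀ x ∉ S, DependsOn (eastC parent r x) (↑S)ᶜ := fun x hx =>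
    (dependsOn_eastC x).mono (by simpa using fun h => hx (hS x h))
  have hDir : ∑ x ∈ univ \ S, finExp q (fun ω => ind (eastC parent r x ω) * varAt q g x ω)
      = μ * finVar q g := by
    rw [sum_finExp_ind_mul_varAt_condExpOn (siteIndependent_eastC hreach) hcS, hf]
    calc finExp q (fun ω => g ω * (μ • f) ω) = μ * finExp q (fun ω => g ω * f ω) := by
          rw [← finExp_const_mul]; congr 1; funext ω
          simp only [Pi.smul_apply, smul_eq_mul]; ring
      _ = μ * finVar q g := by
          rw [← finExp_mul_condExpOn (dependsOn_condExpOn S f), finVar, finExp_condExpOn, hf0]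
          simp only [sq]; ring
  have hnc := exists_updateFinset_ne hgB (fun _ => true) hg
  have h := finGap_le_div hq (treeEastC parent r (univ \ S)) hnc
  rwa [finDir_treeEastC_updateFinset_of_dependsOn hB hgB, hDir,
    finVar_updateFinset_of_dependsOn hgB, mul_div_cancel_right₀ _ (finVar_pos hq hg).ne'] at h

theorem finGap_treeEastC_mul_le_finDir (hq : q ∈ Set.Ioo 0 1) {A : Finset V}
    (hA : ∀ x ∈ A, parent x ∈ A) {f : (V → Bool) → ℝ} (hf : ∀ ω, condExpOn q A f ω = 0) :
    finGap q (treeEastC parent r A) * finExp q (fun ω => f ω ^ 2)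
      ≤ finDir q (eastC parent r) f := by
  set H : V → (V → Bool) → ℝ := fun x ζ => ind (eastC parent r x ζ) * varAt q f x ζ
  have hfiber (ω : V → Bool) : finGap q (treeEastC parent r A) * condExpOn q A (f · ^ 2) ω
      ≤ ∑ x ∈ A, condExpOn q A (H x) ω := by
    have h := finGap_mul_finVar_le_finDir hq (treeEastC parent r A)
      (fun σ => f (updateFinset ω A σ))
    rwa [finVar_updateFinset, hf ω, finDir_treeEastC_updateFinset hA, zero_pow two_ne_zero,
      sub_zero] at h
  calc finGap q (treeEastC parent r A) * finExp q (fun ω => f ω ^ 2)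
      = finExp q (fun ω => finGap q (treeEastC parent r A) * condExpOn q A (f · ^ 2) ω) := by
        rw [finExp_const_mul, finExp_condExpOn]
    _ ≤ ∑ x ∈ A, finExp q (H x) := by
        simpa only [finExp_sum, finExp_condExpOn] using finExp_mono hq hfiber
    _ ≤ ∑ x, finExp q (H x) :=
        sum_le_sum_of_subset_of_nonneg (subset_univ A) fun x _ _ =>
          finExp_nonneg hq fun ω => ind_mul_varAt_nonneg hq _ f x ω
    _ = finDir q (eastC parent r) f := rfl

theorem min_finGap_treeEastC_le_eigenvalue (hq : q ∈ Set.Ioo 0 1)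
    (hreach : ∀ x, ∃ n : ℕ, parent^[n] x = r) {S A : Finset V} (hS : ∀ x, parent x ∈ S → x ∈ S)
    (hA : ∀ x ∈ A, parent x ∈ A) (hSA : S ⊆ A) {f : (V → Bool) → ℝ} {μ : ℝ}
    (hf : negGen q (eastC parent r) f = μ • f) (hnc : ∃ ω ω', f ω ≠ f ω') :
    min (finGap q (treeEastC parent r A)) (finGap q (treeEastC parent r (univ \ S))) ≤ μ := by
  have hc := siteIndependent_eastC hreach
  have hDir : finDir q (eastC parent r) f = μ * finExp q (fun ω => f ω ^ 2) := by
    rw [finDir_eq_finExp_mul_negGen hc, hf, ← finExp_const_mul]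
    congr 1; funext ω; simp only [Pi.smul_apply, smul_eq_mul]; ring
  have hμ : μ ≠ 0 := by
    rintro rfl
    obtain ⟨ω, ω', hne⟩ := hnc
    exact hne (eq_of_finDir_eastC_eq_zero hq hreach (by rw [hDir, zero_mul]) ω ω')
  have hf0 : finExp q f = 0 := by
    have h := finExp_negGen (q := q) hc f
    rw [hf] at h
    change finExp q (fun ω => μ * f ω) = 0 at h
    exact (mul_eq_zero.1 (finExp_const_mul μ f ▸ h)).resolve_left hμ
  by_cases hg : ∃ ω ω', condExpOn q S f ω ≠ condExpOn q S f ω'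
  · exact (min_le_right _ _).trans
      (finGap_treeEastC_le_of_condExpOn_nonconst hq hreach hS hf hf0 hg)
  push Not at hg
  have hg0 (ω : V → Bool) : condExpOn q S f ω = 0 := by
    rw [← hf0, ← finExp_condExpOn S f, ← finExp_const (q := q) (ι := V) (condExpOn q S f ω)]
    exact congrArg _ (funext fun ω' => hg ω ω')
  have hA0 (ω : V → Bool) : condExpOn q A f ω = 0 := by
    rw [← condExpOn_condExpOn_of_subset hSA, funext hg0, condExpOn, finExp_const]
  have hpos : 0 < finExp q (fun ω => f ω ^ 2) := by
    simpa [finVar, hf0] using finVar_pos hq hnc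
  refine (min_le_left _ _).trans (le_of_mul_le_mul_right ?_ hpos)
  exact hDir ▸ finGap_treeEastC_mul_le_finDir hq hA hA0

theorem min_finGap_treeEastC_le (hq : q ∈ Set.Ioo 0 1)
    (hreach : ∀ x, ∃ n : ℕ, parent^[n] x = r) {S A : Finset V} (hS : ∀ x, parent x ∈ S → x ∈ S)
    (hA : ∀ x ∈ A, parent x ∈ A) (hSA : S ⊆ A) :
    min (finGap q (treeEastC parent r A)) (finGap q (treeEastC parent r (univ \ S)))
      ≤ finGap q (treeEastC parent r univ) := by
  have : Nonempty (univ : Finset V) := ⟨⟨r, mem_univ r⟩⟩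
  refine le_finGap hq fun F _ => ?_
  set f : (V → Bool) → ℝ := fun ω => F (univ.restrict ω)
  have hF : F = fun σ => f (updateFinset (fun _ => true) univ σ) := by
    funext σ; simp only [f, restrict_updateFinset]
  rw [hF, finVar_updateFinset_of_dependsOn (by simpa using dependsOn_univ f),
    finDir_treeEastC_updateFinset_of_dependsOn (fun x _ => mem_univ (parent x))
      (by simpa using dependsOn_univ f)]
  exact mul_finVar_le_finDir_of_eigen hq (siteIndependent_eastC hreach)
    (fun g μ hg hnc => min_finGap_treeEastC_le_eigenvalue hq hreach hS hA hSA hg hnc) f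

end Decomposition

end

open scoped Classical in
theorem tree_east_gap_ge_min_general {V : Type*} [Fintype V] [DecidableEq V]
    (parent : V → V) (r : V)
    (hreach : ∀ x, ∃ n : ℕ, parent^[n] x = r)
    (v a : V) (hchild : parent a = v)
    (q : ℝ) (hq : q ∈ Set.Ioo (0 : ℝ) 1) :
    min (finGap q (treeEastC parent r
          (Finset.univ.filter (fun y => ∃ k : ℕ, parent^[k] v = y) ∪
           Finset.univ.filter (fun y => ∃ k : ℕ, parent^[k] y = a))))
        (finGap q (treeEastC parent r
          (Finset.univ \ Finset.univ.filter (fun y => ∃ k : ℕ, parent^[k] y = a)))) ≤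
      finGap q (treeEastC parent r (Finset.univ : Finset V)) := by
  refine min_finGap_treeEastC_le hq hreach (fun x hx => ?_) (fun x hx => ?_) subset_union_right
  · obtain ⟨k, hk⟩ := (mem_filter.1 hx).2
    exact mem_filter.2 ⟨mem_univ x, k + 1, hk⟩
  · simp only [mem_union, mem_filter, mem_univ, true_and] at hx ⊢
    rcases hx with ⟨k, hk⟩ | ⟨_ | k, hk⟩
    · exact Or.inl ⟨k + 1, by rw [iterate_succ_apply', hk]⟩
    · exact Or.inl ⟨0, by rw [← hchild, ← hk]; rfl⟩
    · exact Or.inr ⟨k, hk⟩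

open scoped Classical in
/-- Let `T` be a finite tree rooted at `r` (encoded by its parent map),
`v` any vertex, `a` a child of `v`, `Γ_v` the path from `r` to `v`, and `T_a` the subtree
rooted at `a`.  With `A := Γ_v ∪ T_a` and `B := T ∖ T_a`, the spectral gap of the
East-on-tree model on `T` is at least the minimum of the gaps of the East-on-tree models
on `A` and on `B` (all rooted at `r`), at the same parameter `q ∈ (0,1)`. -/
theorem tree_east_gap_ge_min {V : Type*} [Fintype V] [DecidableEq V]
    (parent : V → V) (r : V) (hroot : parent r = r)
    (hreach : ∀ x, ∃ n : ℕ, parent^[n] x = r)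
    (v a : V) (hchild : parent a = v) (hav : a ≠ v)
    (q : ℝ) (hq : q ∈ Set.Ioo (0 : ℝ) 1) :
    min (finGap q (treeEastC parent r
          (Finset.univ.filter (fun y => ∃ k : ℕ, parent^[k] v = y) ∪
           Finset.univ.filter (fun y => ∃ k : ℕ, parent^[k] y = a))))
        (finGap q (treeEastC parent r
          (Finset.univ \ Finset.univ.filter (fun y => ∃ k : ℕ, parent^[k] y = a)))) ≤
      finGap q (treeEastC parent r (Finset.univ : Finset V)) :=
  tree_east_gap_ge_min_general parent r hreach v a hchild q hq
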